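/- arXiv:2308.01886 — 7 statements merged into one kernel-verified Lean document; each statement's English description precedes it below -/
import Mathlib

section
/- For a hyperedge e of an n-qubit system and a subset e' ⊆ e, the conjugation (∏_{i∈e'} X_i) · CZ_e · (∏_{i∈e'} X_i) equals ∏_{q⊆e'} CZ_{e\q}, where the product runs over all subsets q of e' (including q = ∅, and with the convention CZ_∅ = −1). -/
/-!
Conjugation by `X^x` permutes the basis states by `a ↦ a + x`, so it turns a diagonal operator
with phases `d` into the one with phases `a ↦ d (a + x)`, and the theorem becomes an identity of
phases. Flipping a single qubit `i ∈ e` multiplies the phase of `CZ_e` by that of `CZ_{e \ i}`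
(`X_i CZ_e X_i = CZ_e CZ_{e \ i}`: the two phases differ exactly when all qubits of `e \ i` are
set). Induction on `e'`, splitting the subsets of `insert i e'` by whether they contain `i`, then
gives the product over all `q ⊆ e'`.
-/

open Matrix Finset

/-- Diagonal phase of the generalized controlled-Z gate `CZ_e` at basis state `a`:
`-1` if all bits of `a` in `e` are `1`, else `1`.  For `e = ∅` this is constantly `-1`. -/
def czsign {n : ℕ} (e : Finset (Fin n)) (a : Fin n → ZMod 2) : ℂ :=
  if ∀ j ∈ e, a j = 1 then -1 else 1

/-- The generalized controlled-Z gate `CZ_e` on `(ℂ²)^⊗n` (with `CZ_∅ = -𝟙`). -/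
def CZ {n : ℕ} (e : Finset (Fin n)) : Matrix (Fin n → ZMod 2) (Fin n → ZMod 2) ℂ :=
  Matrix.diagonal (czsign e)

/-- The multi-qubit Pauli-X operator `X^x`: `|a⟩ ↦ |a + x⟩`. -/
def Xmat {n : ℕ} (x : Fin n → ZMod 2) : Matrix (Fin n → ZMod 2) (Fin n → ZMod 2) ℂ :=
  fun a b => if b = a + x then 1 else 0

lemma Xmat_mul_diagonal_mul_Xmat {n : ℕ} (x : Fin n → ZMod 2) (d : (Fin n → ZMod 2) → ℂ) :
    Xmat x * diagonal d * Xmat x = diagonal fun a => d (a + x) := by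
  have hxx : ∀ a : Fin n → ZMod 2, a + x + x = a :=
    fun a => funext fun j => CharTwo.add_cancel_right (a j) (x j)
  ext a b
  simp only [mul_apply, Xmat, diagonal_apply, ite_mul, one_mul, zero_mul]
  rw [sum_eq_single (a + x) (fun c _ hc => by simp [hc.symm]) (by simp)]
  simp [hxx, eq_comm]

lemma czsign_insert_add_single {n : ℕ} {i : Fin n} {s : Finset (Fin n)} (hi : i ∉ s)
    (b : Fin n → ZMod 2) :
    czsign (insert i s) (b + Pi.single i 1) = czsign (insert i s) b * czsign s b := by
  have hs : (∀ j ∈ s, b j + (Pi.single i 1 : Fin n → ZMod 2) j = 1) ↔ ∀ j ∈ s, b j = 1 :=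
    forall₂_congr fun j hj => by rw [Pi.single_eq_of_ne (ne_of_mem_of_not_mem hj hi), add_zero]
  have hbi : b i = 0 ∨ b i = 1 := by
    generalize b i = x
    revert x; decide
  unfold czsign
  simp only [forall_mem_insert, Pi.add_apply, Pi.single_eq_same, hs]
  rcases hbi with hbi | hbi <;> split_ifs <;> simp_all

lemma czsign_add_indicator {n : ℕ} {e e' : Finset (Fin n)} (h : e' ⊆ e) (a : Fin n → ZMod 2) :
    czsign e (a + fun j => if j ∈ e' then 1 else 0) = ∏ q ∈ e'.powerset, czsign (e \ q) a := by
  induction e' using Finset.induction_on generalizing e with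
  | empty => simp [← Pi.zero_def]
  | insert i s hi ih =>
    have hie : i ∈ e := h (mem_insert_self i s)
    have hse : s ⊆ e.erase i := fun j hj =>
      mem_erase.2 ⟨ne_of_mem_of_not_mem hj hi, h (mem_insert_of_mem hj)⟩
    have hind : (fun j => if j ∈ insert i s then (1 : ZMod 2) else 0)
        = (fun j => if j ∈ s then 1 else 0) + Pi.single i 1 := by
      funext j
      by_cases hj : j = i
      · subst hj; simp [hi]
      · simp [hj]
    have hstep := czsign_insert_add_single (notMem_erase i e)
      (a + fun j => if j ∈ s then 1 else 0)
    rw [insert_erase hie] at hstep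
    rw [hind, ← add_assoc, hstep, ih (hse.trans (erase_subset i e)), ih hse,
      prod_powerset_insert hi]
    simp only [sdiff_insert, erase_sdiff_comm]

/-- The product of the commuting diagonal gates `CZ_{e \ q}` is written as the diagonal matrix
of the product of their phases. -/
theorem Xprod_conj_CZ (n : ℕ) (e e' : Finset (Fin n)) (h : e' ⊆ e) :
    Xmat (fun j => if j ∈ e' then 1 else 0) * CZ e * Xmat (fun j => if j ∈ e' then 1 else 0)
      = Matrix.diagonal (fun a => ∏ q ∈ e'.powerset, czsign (e \ q) a) := by
  rw [CZ, Xmat_mul_diagonal_mul_Xmat]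
  exact congrArg diagonal (funext (czsign_add_indicator h))
end

section
/- For every integer m ≥ 0, Σ_{m'=0}^{m} C(m, m') · T(m, m')⁴ = 2^{4m} / 2^{m + ((−1)^m − 1)/2}, where T(m,m') := Σ_{w=0}^{m−m'} Σ_{w'=0}^{m'} C(m−m', w)·C(m', w')·(−1)^{w' + (w+w')(w+w'−1)/2}. Equivalently, the sum equals 2^{3m} when m is even and 2^{3m+1} when m is odd. -/
open Finset

/-- `T(m,m')`, the trace of the diagonal phase unitary of the complete graph on `m` vertices
with `m'` additional single-vertex Z gates. -/
def Tval (m m' : ℕ) : ℤ :=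
  ∑ w ∈ Finset.range (m - m' + 1), ∑ w' ∈ Finset.range (m' + 1),
    (Nat.choose (m - m') w : ℤ) * (Nat.choose m' w' : ℤ)
      * (-1 : ℤ) ^ (w' + (w + w') * (w + w' - 1) / 2)

/-!
With `i² = -1` one has `2 (-1)^C(n,2) = (1 + i)(-i)^n + (1 - i) i^n`, so the binomial theorem
turns `2 T(m,m')` into `i^(m'+1) (1 - i)^(m+1) + (-i)^(m'+1) (1 + i)^(m+1)`, a Gaussian integer
plus its conjugate. Squaring with `(1 ± i)² = ±2i` gives `T(m,m')² = 2^m` for even `m`, and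
`T(m,m')² = 2^m (1 ± 1)`, with sign `(-1)^(m' + ⌊m/2⌋)`, for odd `m`. In the odd case
`T⁴ = 2^(m+1) T²`, and the sum reduces to `∑ C(m,m') = 2^m` and `∑ (-1)^m' C(m,m') = 0`.
-/

theorem one_add_pow_eq_sum_choose {R : Type*} [CommSemiring R] (x : R) (n : ℕ) :
    (1 + x) ^ n = ∑ k ∈ range (n + 1), (n.choose k : R) * x ^ k := by
  rw [add_comm, add_pow]
  exact sum_congr rfl fun k _ => by ring

theorem Nat.add_two_choose_two (n : ℕ) : (n + 2).choose 2 = n.choose 2 + (2 * n + 1) := by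
  simp only [Nat.choose_succ_succ, Nat.choose_one_right, Nat.choose_zero_right]
  ring

section ImaginaryUnit

variable {R : Type*} [CommRing R] {i : R}

theorem two_mul_neg_one_pow_choose_two (hi : i ^ 2 = -1) (n : ℕ) :
    2 * (-1 : R) ^ n.choose 2 = (1 + i) * (-i) ^ n + (1 - i) * i ^ n := by
  induction n using Nat.twoStepInduction with
  | zero => norm_num
  | one => norm_num; linear_combination 2 * hi
  | more n ih _ =>
    have hsign : (-1 : R) ^ (n + 2).choose 2 = -(-1) ^ n.choose 2 := by
      rw [Nat.add_two_choose_two, pow_add, pow_succ, pow_mul]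
      simp
    linear_combination 2 * hsign - ih - ((1 + i) * (-i) ^ n + (1 - i) * i ^ n) * hi

theorem two_mul_Tval (hi : i ^ 2 = -1) {m m' : ℕ} (h : m' ≤ m) :
    2 * (Tval m m' : R)
      = i ^ (m' + 1) * (1 - i) ^ (m + 1) + (-i) ^ (m' + 1) * (1 + i) ^ (m + 1) := by
  obtain ⟨a, rfl⟩ := Nat.exists_eq_add_of_le h
  have hexpand : 2 * (Tval (m' + a) m' : R)
      = (1 + i) * ((1 - i) ^ a * (1 + i) ^ m') + (1 - i) * ((1 + i) ^ a * (1 - i) ^ m') := by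
    simp only [Tval, Nat.add_sub_cancel_left, ← Nat.choose_two_right, sub_eq_add_neg,
      one_add_pow_eq_sum_choose, sum_mul_sum]
    push_cast
    simp only [mul_sum, ← sum_add_distrib]
    refine sum_congr rfl fun w _ => sum_congr rfl fun w' _ => ?_
    have hsign := two_mul_neg_one_pow_choose_two hi (w + w')
    -- the factor `(-1)^w'` of `T` turns `(-i)^w'` into `i^w'` and back
    have hsq : ((-1 : R) ^ w') ^ 2 = 1 := by rw [pow_right_comm, neg_one_sq, one_pow]
    rw [pow_add] at hsign ⊢
    linear_combination (a.choose w * m'.choose w' * (-1 : R) ^ w') * hsign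
      + (a.choose w * m'.choose w' * (1 + i) * i ^ w' * (-i) ^ w) * hsq
  have h1 : 1 + i = i * (1 - i) := by linear_combination hi
  have h2 : 1 - i = -i * (1 + i) := by linear_combination hi
  calc 2 * (Tval (m' + a) m' : R)
      = (1 + i) ^ (m' + 1) * (1 - i) ^ a + (1 - i) ^ (m' + 1) * (1 + i) ^ a := by
        rw [hexpand]; ring
    _ = (i * (1 - i)) ^ (m' + 1) * (1 - i) ^ a + (-i * (1 + i)) ^ (m' + 1) * (1 + i) ^ a := by
        rw [← h1, ← h2]
    _ = _ := by
        rw [mul_pow, mul_pow, show m' + a + 1 = m' + 1 + a by ring, pow_add, pow_add]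
        ring

theorem four_mul_Tval_sq (hi : i ^ 2 = -1) {m m' : ℕ} (h : m' ≤ m) :
    4 * (Tval m m' : R) ^ 2
      = 2 ^ (m + 2) - (-1) ^ m' * 2 ^ (m + 1) * (i ^ (m + 1) + (-i) ^ (m + 1)) := by
  have hplus : (1 + i) ^ 2 = 2 * i := by linear_combination hi
  have hminus : (1 - i) ^ 2 = -(2 * i) := by linear_combination hi
  have hnorm : (1 - i) * (1 + i) = 2 := by linear_combination -hi
  have hunit : i * -i = 1 := by linear_combination -hi
  calc 4 * (Tval m m' : R) ^ 2 = (2 * (Tval m m' : R)) ^ 2 := by ring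
    _ = (i ^ (m' + 1) * (1 - i) ^ (m + 1)) ^ 2 + ((-i) ^ (m' + 1) * (1 + i) ^ (m + 1)) ^ 2
        + 2 * (i ^ (m' + 1) * (-i) ^ (m' + 1)) * ((1 - i) ^ (m + 1) * (1 + i) ^ (m + 1)) := by
        rw [two_mul_Tval hi h]; ring
    _ = (i ^ 2) ^ (m' + 1) * ((1 - i) ^ 2) ^ (m + 1)
        + ((-i) ^ 2) ^ (m' + 1) * ((1 + i) ^ 2) ^ (m + 1)
        + 2 * (i * -i) ^ (m' + 1) * ((1 - i) * (1 + i)) ^ (m + 1) := by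
        simp only [mul_pow, ← pow_mul, mul_comm]
    _ = _ := by
        rw [hplus, hminus, hnorm, hunit, neg_sq, hi, neg_pow (2 * i)]
        ring

end ImaginaryUnit

theorem Tval_sq_of_even {k m' : ℕ} (h : m' ≤ 2 * k) : Tval (2 * k) m' ^ 2 = 2 ^ (2 * k) := by
  have h4 := four_mul_Tval_sq Complex.I_sq h
  rw [Odd.neg_pow ⟨k, rfl⟩, add_neg_cancel, mul_zero, sub_zero] at h4
  have hC : ((Tval (2 * k) m' ^ 2 : ℤ) : ℂ) = ((2 ^ (2 * k) : ℤ) : ℂ) := by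
    push_cast
    linear_combination h4 / 4
  exact_mod_cast hC

theorem Tval_sq_of_odd {k m' : ℕ} (h : m' ≤ 2 * k + 1) :
    Tval (2 * k + 1) m' ^ 2 = 2 ^ (2 * k + 1) * (1 + (-1) ^ (m' + k)) := by
  have h4 := four_mul_Tval_sq Complex.I_sq h
  rw [show 2 * k + 1 + 1 = 2 * (k + 1) by ring, Even.neg_pow (even_two_mul _), pow_mul Complex.I,
    Complex.I_sq] at h4
  have hC : ((Tval (2 * k + 1) m' ^ 2 : ℤ) : ℂ)
      = ((2 ^ (2 * k + 1) * (1 + (-1) ^ (m' + k)) : ℤ) : ℂ) := by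
    push_cast
    linear_combination h4 / 4
  exact_mod_cast hC

theorem sum_choose_mul_Tval_pow_four_of_even (k : ℕ) :
    ∑ m' ∈ range (2 * k + 1), ((2 * k).choose m' : ℤ) * Tval (2 * k) m' ^ 4
      = 2 ^ (6 * k) := by
  calc _ = ∑ m' ∈ range (2 * k + 1), ((2 * k).choose m' : ℤ) * (2 ^ (2 * k)) ^ 2 :=
        sum_congr rfl fun m' hm' => by
          rw [← Tval_sq_of_even (Nat.lt_succ_iff.mp (mem_range.mp hm'))]; ring
    _ = 2 ^ (2 * k) * (2 ^ (2 * k)) ^ 2 := by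
        rw [← sum_mul]; norm_cast; rw [Nat.sum_range_choose]
    _ = 2 ^ (6 * k) := by ring

theorem sum_choose_mul_Tval_pow_four_of_odd (k : ℕ) :
    ∑ m' ∈ range (2 * k + 1 + 1), ((2 * k + 1).choose m' : ℤ) * Tval (2 * k + 1) m' ^ 4
      = 2 ^ (6 * k + 4) := by
  calc _ = ∑ m' ∈ range (2 * k + 1 + 1),
        2 ^ (4 * k + 3)
          * (((2 * k + 1).choose m' : ℤ) + (-1) ^ k * ((-1) ^ m' * (2 * k + 1).choose m')) :=
        sum_congr rfl fun m' hm' => by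
          have hsq := Tval_sq_of_odd (Nat.lt_succ_iff.mp (mem_range.mp hm'))
          have hsign : ((-1 : ℤ) ^ (m' + k)) ^ 2 = 1 := by
            rw [pow_right_comm, neg_one_sq, one_pow]
          linear_combination ((2 * k + 1).choose m' * (Tval (2 * k + 1) m' ^ 2
            + 2 ^ (2 * k + 1) * (1 + (-1) ^ (m' + k)))) * hsq
            + ((2 * k + 1).choose m' * 2 ^ (4 * k + 2)) * hsign
    _ = 2 ^ (4 * k + 3) * (2 ^ (2 * k + 1) + (-1) ^ k * 0) := by
        rw [← mul_sum, sum_add_distrib, ← mul_sum,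
          Int.alternating_sum_range_choose_of_ne (by omega)]
        norm_cast; rw [Nat.sum_range_choose]
    _ = 2 ^ (6 * k + 4) := by ring

/-- `Σ_{m'=0}^{m} C(m,m') · T(m,m')⁴ = 2^{4m} / 2^{m + ((−1)^m − 1)/2}`, i.e. the sum equals
`2^{3m}` when `m` is even and `2^{3m+1}` when `m` is odd. -/
theorem sum_choose_Tval_pow_four (m : ℕ) :
    ∑ m' ∈ Finset.range (m + 1), (Nat.choose m m' : ℤ) * (Tval m m') ^ 4
      = if Even m then 2 ^ (3 * m) else 2 ^ (3 * m + 1) := by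
  obtain ⟨k, rfl | rfl⟩ := Nat.even_or_odd' m
  · rw [if_pos (even_two_mul k), sum_choose_mul_Tval_pow_four_of_even]; ring
  · rw [if_neg (Nat.not_even_two_mul_add_one k), sum_choose_mul_Tval_pow_four_of_odd]; ring
end

section
/- For every integer m ≥ 0, Σ_{m'=0}^{m} C(m, m') · |T(m, m')| = 2^{3m/2 + ((−1)^m − 1)/4}, where T(m,m') := Σ_{w=0}^{m−m'} Σ_{w'=0}^{m'} C(m−m', w)·C(m', w')·(−1)^{w' + (w+w')(w+w'−1)/2}. Equivalently, the sum equals 2^{3m/2} when m is even and 2^{(3m−1)/2} when m is odd. -/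
open Finset

/- Auxiliary development: Gaussian integers `G = Zsqrtd (-1)` with `gi = i`. -/

abbrev G := Zsqrtd (-1)

def gi : G := ⟨0, 1⟩

def reHom : G →+ ℤ := { toFun := Zsqrtd.re, map_zero' := rfl, map_add' := fun _ _ => rfl }

lemma key1 (k : ℕ) : ((1 + gi) * (-gi)^k).re = (-1:ℤ)^(k*(k-1)/2) := by
  induction k using Nat.strong_induction_on with
  | _ k ih =>
    rcases Nat.lt_or_ge k 4 with h | h
    · interval_cases k <;> decide
    · obtain ⟨j, rfl⟩ : ∃ j, k = j + 4 := ⟨k - 4, by omega⟩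
      have hB : Even (j*(j-1)) := by
        cases j with
        | zero => simp
        | succ i => simpa [Nat.mul_comm] using Nat.even_mul_succ_self i
      have ht : (j+4)*(j+4-1) = j*(j-1) + (8*j+12) := by
        cases j with
        | zero => rfl
        | succ i => simp only [Nat.succ_sub_one]; ring
      have h2 : (j+4)*(j+4-1)/2 = j*(j-1)/2 + (4*j+6) := by
        obtain ⟨c, hc⟩ := hB; omega
      have h4 : (-gi)^4 = 1 := by decide
      rw [pow_add, h4, mul_one, ih j (by omega), h2, pow_add]
      have : ((-1:ℤ))^(4*j+6) = 1 := Even.neg_one_pow ⟨2*j+3, by ring⟩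
      rw [this, mul_one]

lemma binom_expand (n : ℕ) (x : G) :
    (1 + x)^n = ∑ k ∈ range (n+1), x^k * (Nat.choose n k : G) := by
  rw [show (1:G)+x = x+1 by ring, add_pow]; simp

lemma intCast_mul_re (a : ℤ) (z : G) : ((a:G) * z).re = a * z.re := by
  simp [Zsqrtd.re_mul]

lemma gi_pow (n : ℕ) : gi^n = (-1:G)^n * (-gi)^n := by
  simpa using (neg_pow (-gi) n)

lemma term_re (w w' c1 c2 : ℕ) :
    reHom ((1+gi) * (gi^w' * (c2:G)) * ((-gi)^w * (c1:G)))
      = (c1:ℤ) * (c2:ℤ) * (-1:ℤ)^(w' + (w+w')*(w+w'-1)/2) := by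
  have hz : (1+gi) * (gi^w' * (c2:G)) * ((-gi)^w * (c1:G))
      = ((((-1:ℤ)^w' * c1 * c2 : ℤ)) : G) * ((1+gi) * (-gi)^(w+w')) := by
    rw [gi_pow, pow_add]
    push_cast
    ring
  rw [hz]
  show (((((-1:ℤ)^w' * c1 * c2 : ℤ)) : G) * ((1+gi) * (-gi)^(w+w'))).re = _
  rw [intCast_mul_re, key1, pow_add]
  ring

lemma Tval_eq (m m' : ℕ) :
    Tval m m' = ((1 + gi)^(m'+1) * (1 - gi)^(m - m')).re := by
  have h1 : ((1:G) + gi)^(m'+1)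
      = (1+gi) * ∑ w' ∈ range (m'+1), gi^w' * (Nat.choose m' w' : G) := by
    rw [pow_succ', binom_expand]
  have h2 : ((1:G) - gi)^(m - m')
      = ∑ w ∈ range (m - m' + 1), (-gi)^w * (Nat.choose (m-m') w : G) := by
    rw [sub_eq_add_neg, binom_expand]
  rw [h1, h2]
  simp only [Finset.mul_sum, Finset.sum_mul]
  show Tval m m' = reHom _
  rw [map_sum]
  simp only [map_sum, term_re]
  unfold Tval
  apply Finset.sum_congr rfl; intro w _
  apply Finset.sum_congr rfl; intro w' _
  ring

lemma z_transform (m m' : ℕ) (h : m' ≤ m) :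
    (1+gi)^(m'+1) * (1-gi)^(m-m') = (-gi)^(m-m') * (1+gi)^(m+1) := by
  rw [show (1:G)-gi = (-gi)*(1+gi) by decide, mul_pow, ← mul_assoc,
    mul_comm ((1+gi)^(m'+1)), mul_assoc, ← pow_add]
  congr 2
  omega

lemma abs_re_even (q n : ℕ) : |((-gi)^n * (1+gi)^(2*q+1)).re| = 2^q := by
  have hz : (-gi)^n * (1+gi)^(2*q+1)
      = ((2^q*(-1:ℤ)^q : ℤ):G) * ((1+gi)*(-gi)^(n+q)) := by
    rw [pow_succ, pow_mul, show ((1:G)+gi)^2 = 2*gi by decide, mul_pow, gi_pow, pow_add]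
    push_cast
    ring
  rw [hz, intCast_mul_re, key1, abs_mul, abs_mul, abs_pow, abs_pow, abs_pow]
  norm_num

lemma neg_gi_pow_re (t : ℕ) : ((-gi)^t).re = if Even t then (-1:ℤ)^(t/2) else 0 := by
  rcases Nat.even_or_odd t with ⟨s, hs⟩ | ⟨s, hs⟩
  · subst hs
    rw [if_pos ⟨s, rfl⟩]
    have hz : (-gi)^(s+s) = (((-1:ℤ)^s : ℤ):G) := by
      rw [← two_mul, pow_mul, show ((-gi):G)^2 = -1 by decide]
      push_cast
      ring
    rw [hz, show (s+s)/2 = s by omega, Zsqrtd.re_intCast]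
  · subst hs
    rw [if_neg (by rw [Nat.even_iff]; omega)]
    have hz : (-gi)^(2*s+1) = (((-1:ℤ)^s:ℤ):G) * (-gi) := by
      rw [pow_succ, pow_mul, show ((-gi):G)^2 = -1 by decide]
      push_cast
      ring
    rw [hz, intCast_mul_re]
    simp [gi]

lemma abs_re_odd (q n : ℕ) : |((-gi)^n * (1+gi)^(2*q+2)).re|
    = if Even (n+q+1) then 2^(q+1) else (0:ℤ) := by
  have hz : (-gi)^n * (1+gi)^(2*q+2)
      = ((2^(q+1)*(-1:ℤ)^(q+1) : ℤ):G) * ((-gi)^(n+q+1)) := by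
    rw [show 2*q+2 = 2*(q+1) by ring, pow_mul, show ((1:G)+gi)^2 = 2*gi by decide,
      mul_pow, gi_pow, pow_add]
    push_cast
    ring
  rw [hz, intCast_mul_re, neg_gi_pow_re]
  split
  · rw [abs_mul, abs_mul, abs_pow, abs_pow, abs_pow]
    norm_num
  · simp

lemma sum_choose_parity (n r : ℕ) (hn : n ≠ 0) :
    ∑ i ∈ range (n+1), (if i % 2 = r % 2 then (n.choose i : ℤ) else 0) = 2^(n-1) := by
  set A := ∑ i ∈ range (n+1), (if i % 2 = r % 2 then (n.choose i : ℤ) else 0) with hA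
  set B := ∑ i ∈ range (n+1), (if i % 2 = r % 2 then 0 else (n.choose i : ℤ)) with hB
  have hsum : A + B = 2^n := by
    rw [hA, hB, ← Finset.sum_add_distrib]
    have h1 : ∀ i ∈ range (n+1),
        ((if i % 2 = r % 2 then (n.choose i : ℤ) else 0)
          + (if i % 2 = r % 2 then 0 else (n.choose i:ℤ))) = (n.choose i : ℤ) := by
      intro i _; split <;> ring
    rw [Finset.sum_congr rfl h1]
    exact_mod_cast congrArg (Nat.cast : ℕ → ℤ) (Nat.sum_range_choose n)
  have halt : ∑ i ∈ range (n+1), (-1:ℤ)^i * n.choose i = 0 := by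
    simpa [hn] using Int.alternating_sum_range_choose (n := n)
  have hAB : A = B := by
    rcases Nat.mod_two_eq_zero_or_one r with hr | hr <;> rw [hr] at hA hB
    · have : A - B = ∑ i ∈ range (n+1), (-1:ℤ)^i * n.choose i := by
        rw [hA, hB, ← Finset.sum_sub_distrib]
        apply Finset.sum_congr rfl; intro i _
        by_cases h : i % 2 = 0
        · rw [if_pos h, if_pos h, (Nat.even_iff.mpr h).neg_one_pow]; ring
        · rw [if_neg h, if_neg h,
            (Nat.odd_iff.mpr (by omega)).neg_one_pow]; ring
      have := this.trans halt; linarith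
    · have : B - A = ∑ i ∈ range (n+1), (-1:ℤ)^i * n.choose i := by
        rw [hA, hB, ← Finset.sum_sub_distrib]
        apply Finset.sum_congr rfl; intro i _
        by_cases h : i % 2 = 1
        · rw [if_pos h, if_pos h, (Nat.odd_iff.mpr h).neg_one_pow]; ring
        · rw [if_neg h, if_neg h,
            (Nat.even_iff.mpr (by omega)).neg_one_pow]; ring
      have := this.trans halt; linarith
  have h2 : (2:ℤ)^n = 2 * 2^(n-1) := by
    rw [← pow_succ']; congr 1; omega
  linarith

/-- `Σ_{m'=0}^{m} C(m,m') · |T(m,m')| = 2^{3m/2 + ((−1)^m − 1)/4}`, i.e. the sum equals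
`2^{3m/2}` when `m` is even and `2^{(3m−1)/2}` when `m` is odd. -/
theorem sum_choose_abs_Tval (m : ℕ) :
    ∑ m' ∈ Finset.range (m + 1), (Nat.choose m m' : ℤ) * |Tval m m'|
      = if Even m then 2 ^ (3 * m / 2) else 2 ^ ((3 * m - 1) / 2) := by
  rcases Nat.even_or_odd m with he | ho
  · obtain ⟨q, hq⟩ : ∃ q, m = 2*q := by obtain ⟨r, hr⟩ := he; exact ⟨r, by omega⟩
    subst hq
    rw [if_pos he]
    have hterm : ∀ m' ∈ range (2*q+1),
        (Nat.choose (2*q) m' : ℤ) * |Tval (2*q) m'|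
          = (Nat.choose (2*q) m' : ℤ) * 2^q := by
      intro m' hm'
      rw [Tval_eq, z_transform _ _ (by simp at hm'; omega), abs_re_even]
    rw [Finset.sum_congr rfl hterm, ← Finset.sum_mul]
    have hcs : (∑ m' ∈ range (2*q+1), (Nat.choose (2*q) m' : ℤ)) = 2^(2*q) := by
      exact_mod_cast congrArg (Nat.cast : ℕ → ℤ) (Nat.sum_range_choose (2*q))
    rw [hcs, ← pow_add]
    congr 1
    omega
  · obtain ⟨q, hq⟩ := ho
    subst hq
    rw [if_neg (by rw [Nat.even_iff]; omega)]
    have hterm : ∀ m' ∈ range (2*q+1+1),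
        (Nat.choose (2*q+1) m' : ℤ) * |Tval (2*q+1) m'|
          = 2^(q+1) * (if m' % 2 = q % 2 then (Nat.choose (2*q+1) m' : ℤ) else 0) := by
      intro m' hm'
      simp only [mem_range] at hm'
      rw [Tval_eq, z_transform _ _ (by omega),
        show (2*q+1+1) = 2*q+2 by omega, abs_re_odd]
      have hc : Even (2*q+1 - m' + q + 1) ↔ (m' % 2 = q % 2) := by
        rw [Nat.even_iff]; omega
      rw [if_congr hc rfl rfl]
      split <;> ring
    rw [Finset.sum_congr rfl hterm, ← Finset.mul_sum,
      sum_choose_parity (2*q+1) q (by omega), ← pow_add]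
    congr 1
    omega
end

section
/- Let n ≥ 1. Count the pairs (T, x) where T = (t₁,…,t_n) with each t_i ∈ {0,1}⁴ of even parity, x ∈ {0,1}^n, satisfying: for every 3-element subset e ⊆ {1,…,n}, Σ_{i∈e} x_i · ‖⊙_{k∈e,k≠i} t_k‖₁ ≡ 0 (mod 2). The number N of such pairs satisfies N = 2^{4n} · (7·2^{−n} − 14·4^{−n} + 8·8^{−n}); equivalently N = 7·2^{3n} − 14·2^{2n} + 8·2^{n}. -/
open Finset

def wt {m : ℕ} (u : Fin m → ZMod 2) : ℕ := (Finset.univ.filter fun j => u j = 1).card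

namespace TUH

abbrev V := Fin 4 → ZMod 2

def B (u v : V) : ZMod 2 := ∑ j, u j * v j

def S (u : V) : Prop := ∑ j, u j = 0

instance : DecidablePred S := fun u => by unfold S; infer_instance

lemma wt_cast {m : ℕ} (u : Fin m → ZMod 2) : ((wt u : ℕ) : ZMod 2) = ∑ j, u j := by
  unfold wt
  rw [Finset.card_filter]
  push_cast
  apply Finset.sum_congr rfl
  intro j _
  rcases (by decide : ∀ z : ZMod 2, z = 0 ∨ z = 1) (u j) with h | h <;> simp [h]

lemma even_iff {m : ℕ} (u : Fin m → ZMod 2) : Even (wt u) ↔ (∑ j, u j) = 0 := by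
  rw [← wt_cast, ZMod.natCast_eq_zero_iff]
  exact ⟨fun ⟨k, hk⟩ => ⟨k, by omega⟩, fun ⟨k, hk⟩ => ⟨k, by omega⟩⟩

lemma B_comm (u v : V) : B u v = B v u :=
  Finset.sum_congr rfl fun j _ => mul_comm _ _

lemma B_self : ∀ u : V, S u → B u u = 0 := by decide

lemma B_lin (u v w : V) (a b : ZMod 2) :
    B u (fun j => a * v j + b * w j) = a * B u v + b * B u w := by
  unfold B
  rw [Finset.mul_sum, Finset.mul_sum, ← Finset.sum_add_distrib]
  exact Finset.sum_congr rfl fun j _ => by ring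

set_option maxHeartbeats 2000000 in
lemma ident : ∀ u v y w : V, S u → S v → S y → S w →
    B u w * B v y + B v w * B u y + B y w * B u v = 0 := by decide

def Q {n : ℕ} (t : Fin n → V) (x : Fin n → ZMod 2) : Prop :=
  ∀ a b c : Fin n, a ≠ b → a ≠ c → b ≠ c →
    x a * B (t b) (t c) + x b * B (t a) (t c) + x c * B (t a) (t b) = 0

instance {n : ℕ} (t : Fin n → V) : DecidablePred (Q t) := fun x => by
  unfold Q; infer_instance

lemma sum3 {n : ℕ} (t : Fin n → V) (x : Fin n → ZMod 2) {a b c : Fin n}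
    (hab : a ≠ b) (hac : a ≠ c) (hbc : b ≠ c) :
    ∑ i ∈ ({a, b, c} : Finset (Fin n)),
        x i * ((wt fun j => ∏ k ∈ ({a, b, c} : Finset (Fin n)).erase i, t k j : ℕ) : ZMod 2)
      = x a * B (t b) (t c) + x b * B (t a) (t c) + x c * B (t a) (t b) := by
  have ha : a ∉ ({b, c} : Finset (Fin n)) := by simp [hab, hac]
  have hb : b ∉ ({c} : Finset (Fin n)) := by simp [hbc]
  have e1 : ({a, b, c} : Finset (Fin n)).erase a = {b, c} := Finset.erase_insert ha
  have e2 : ({a, b, c} : Finset (Fin n)).erase b = {a, c} := by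
    rw [Finset.erase_insert_of_ne hab, Finset.erase_insert hb]
  have e3 : ({a, b, c} : Finset (Fin n)).erase c = {a, b} := by
    rw [Finset.erase_insert_of_ne hac, Finset.erase_insert_of_ne hbc,
      Finset.erase_singleton]
    simp
  have pb : ∀ u v : Fin n, u ≠ v →
      ((wt fun j => ∏ k ∈ ({u, v} : Finset (Fin n)), t k j : ℕ) : ZMod 2) = B (t u) (t v) := by
    intro u v huv
    rw [wt_cast]
    exact Finset.sum_congr rfl fun j _ => Finset.prod_pair huv
  rw [Finset.sum_insert ha, Finset.sum_pair hbc, e1, e2, e3, pb b c hbc, pb a c hac, pb a b hab]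
  ring

lemma constr_iff {n : ℕ} (t : Fin n → V) (x : Fin n → ZMod 2) :
    (∀ e : Finset (Fin n), e.card = 3 →
        ∑ i ∈ e, x i * ((wt fun j => ∏ k ∈ e.erase i, t k j : ℕ) : ZMod 2) = 0) ↔ Q t x := by
  constructor
  · intro h a b c hab hac hbc
    have hc : ({a, b, c} : Finset (Fin n)).card = 3 := by
      rw [Finset.card_insert_of_notMem (by simp [hab, hac]), Finset.card_pair hbc]
    have := h _ hc
    rwa [sum3 t x hab hac hbc] at this
  · intro h e he
    obtain ⟨a, b, c, hab, hac, hbc, rfl⟩ := Finset.card_eq_three.mp he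
    rw [sum3 t x hab hac hbc]
    exact h a b c hab hac hbc

lemma Q_of_deg {n : ℕ} (t : Fin n → V) (h : ∀ i j, B (t i) (t j) = 0)
    (x : Fin n → ZMod 2) : Q t x := by
  intro a b c _ _ _
  rw [h b c, h a c, h a b]
  ring

lemma card_nondeg {n : ℕ} {t : Fin n → V} (he : ∀ i, S (t i)) {p q : Fin n}
    (hpq : B (t p) (t q) = 1) :
    Fintype.card {x : Fin n → ZMod 2 // Q t x} = 4 := by
  have hpqne : p ≠ q := by
    rintro rfl
    rw [B_self _ (he p)] at hpq
    exact (by decide : (0 : ZMod 2) ≠ 1) hpq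
  have e : (ZMod 2 × ZMod 2) ≃ {x : Fin n → ZMod 2 // Q t x} :=
    { toFun := fun ab => ⟨fun i => ab.1 * B (t i) (t q) + ab.2 * B (t i) (t p), by
        intro a b c hab hac hbc
        have hw : S (fun j => ab.1 * t q j + ab.2 * t p j) := by
          unfold S
          rw [Finset.sum_add_distrib, ← Finset.mul_sum, ← Finset.mul_sum, he q, he p]
          ring
        have key : ∀ i : Fin n, ab.1 * B (t i) (t q) + ab.2 * B (t i) (t p)
            = B (t i) (fun j => ab.1 * t q j + ab.2 * t p j) := fun i => (B_lin _ _ _ _ _).symm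
        dsimp only
        rw [key a, key b, key c]
        exact ident (t a) (t b) (t c) _ (he a) (he b) (he c) hw⟩
      invFun := fun x => (x.1 p, x.1 q)
      left_inv := fun ab => by
        ext
        · show ab.1 * B (t p) (t q) + ab.2 * B (t p) (t p) = ab.1
          rw [hpq, B_self _ (he p)]; ring
        · show ab.1 * B (t q) (t q) + ab.2 * B (t q) (t p) = ab.2
          rw [B_self _ (he q), B_comm (t q) (t p), hpq]; ring
      right_inv := fun x => by
        apply Subtype.ext
        funext i
        show x.1 p * B (t i) (t q) + x.1 q * B (t i) (t p) = x.1 i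
        by_cases hip : i = p
        · subst hip; rw [hpq, B_self _ (he i)]; ring
        by_cases hiq : i = q
        · subst hiq; rw [B_self _ (he i), B_comm (t i) (t p), hpq]; ring
        · have h0 := x.2 i p q hip hiq hpqne
          rw [hpq, mul_one] at h0
          have h2 : x.1 i + x.1 i = 0 := CharTwo.add_self_eq_zero _
          linear_combination h0 - h2 }
  rw [Fintype.card_congr e.symm, Fintype.card_prod, ZMod.card]

def r : V := fun _ => 1
def w1 : V := ![1, 1, 0, 0]
def w2 : V := ![1, 0, 1, 0]
def w3 : V := ![1, 0, 0, 1]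

def M (v u : V) : Prop := u = 0 ∨ u = r ∨ u = v ∨ u = v + r

instance (v : V) : DecidablePred (M v) := fun u => by unfold M; infer_instance

lemma mem_S : ∀ u : V, (M w1 u ∨ M w2 u ∨ M w3 u) → S u := by decide

lemma orth : ∀ u v : V, ((M w1 u ∧ M w1 v) ∨ (M w2 u ∧ M w2 v) ∨ (M w3 u ∧ M w3 v)) →
    B u v = 0 := by decide

lemma cover : ∀ u : V, S u → M w1 u ∨ M w2 u ∨ M w3 u := by decide

lemma core12 : ∀ u : V, M w1 u → M w2 u → u = 0 ∨ u = r := by decide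
lemma core123 : ∀ u : V, (M w1 u ∨ M w2 u) → M w3 u → u = 0 ∨ u = r := by decide
lemma core_sub : ∀ u : V, (u = 0 ∨ u = r) → M w1 u ∧ M w2 u ∧ M w3 u := by decide

lemma push_lem : ∀ u v : V, S v → ¬(u = 0 ∨ u = r) → B u v = 0 →
    ((M w1 u → M w1 v) ∧ (M w2 u → M w2 v) ∧ (M w3 u → M w3 v)) := by decide

lemma card_Mw1 : Fintype.card {u : V // M w1 u} = 4 := by decide
lemma card_Mw2 : Fintype.card {u : V // M w2 u} = 4 := by decide
lemma card_Mw3 : Fintype.card {u : V // M w3 u} = 4 := by decide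
lemma card_core : Fintype.card {u : V // u = 0 ∨ u = r} = 2 := by decide
lemma card_S : Fintype.card {u : V // S u} = 8 := by decide

lemma deg_iff {n : ℕ} (t : Fin n → V) (he : ∀ i, S (t i)) :
    (∀ i j, B (t i) (t j) = 0) ↔
      ((∀ i, M w1 (t i)) ∨ (∀ i, M w2 (t i)) ∨ (∀ i, M w3 (t i))) := by
  constructor
  · intro h
    by_cases h0 : ∀ i, t i = 0 ∨ t i = r
    · exact Or.inl fun i => (core_sub _ (h0 i)).1
    · rw [not_forall] at h0
      obtain ⟨p, hp⟩ := h0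
      rcases cover _ (he p) with h1 | h2 | h3
      · exact Or.inl fun i => (push_lem _ _ (he i) hp (h p i)).1 h1
      · exact Or.inr (Or.inl fun i => (push_lem _ _ (he i) hp (h p i)).2.1 h2)
      · exact Or.inr (Or.inr fun i => (push_lem _ _ (he i) hp (h p i)).2.2 h3)
  · rintro (h | h | h) i j
    · exact orth _ _ (Or.inl ⟨h i, h j⟩)
    · exact orth _ _ (Or.inr (Or.inl ⟨h i, h j⟩))
    · exact orth _ _ (Or.inr (Or.inr ⟨h i, h j⟩))

lemma card_forall {n : ℕ} (p : V → Prop) [DecidablePred p] (c : ℕ)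
    (hc : Fintype.card {u : V // p u} = c) :
    (Finset.univ.filter fun t : Fin n → V => ∀ i, p (t i)).card = c ^ n := by
  rw [← Fintype.card_subtype,
    Fintype.card_congr (Equiv.subtypePiEquivPi (p := fun _ b => p b)),
    Fintype.card_pi]
  simp [hc]


end TUH

open TUH in
/-- The number of pairs `(T,x)`, with `T = (t₁,…,t_n)` a tuple of even-parity vectors in
`{0,1}⁴` and `x ∈ {0,1}^n`, satisfying all 3-edge constraints
`Σ_{i∈e} x_i·‖⊙_{k∈e,k≠i} t_k‖₁ ≡ 0 (mod 2)`, equals `7·2^{3n} − 14·2^{2n} + 8·2^n`. -/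
theorem card_valid_pairs_three_uniform (n : ℕ) (hn : 1 ≤ n) :
    (Nat.card {p : (Fin n → Fin 4 → ZMod 2) × (Fin n → ZMod 2) //
        (∀ i, Even (wt (p.1 i))) ∧
        ∀ e : Finset (Fin n), e.card = 3 →
          ∑ i ∈ e, p.2 i * ((wt fun j => ∏ k ∈ e.erase i, p.1 k j : ℕ) : ZMod 2) = 0} : ℤ)
      = 7 * 2 ^ (3 * n) - 14 * 2 ^ (2 * n) + 8 * 2 ^ n := by
  have hP : ∀ p : (Fin n → V) × (Fin n → ZMod 2),
      ((∀ i, Even (wt (p.1 i))) ∧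
        ∀ e : Finset (Fin n), e.card = 3 →
          ∑ i ∈ e, p.2 i * ((wt fun j => ∏ k ∈ e.erase i, p.1 k j : ℕ) : ZMod 2) = 0) ↔
      ((∀ i, S (p.1 i)) ∧ Q p.1 p.2) := fun p =>
    and_congr (forall_congr' fun i => even_iff _) (constr_iff _ _)
  have hval : ∀ t : Fin n → V,
      Fintype.card {x : Fin n → ZMod 2 // (∀ i, S (t i)) ∧ Q t x}
        = if (∀ i, S (t i)) then (if (∀ i j, B (t i) (t j) = 0) then 2 ^ n else 4) else 0 := by
    intro t
    by_cases he : ∀ i, S (t i)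
    · rw [if_pos he]
      by_cases hd : ∀ i j, B (t i) (t j) = 0
      · rw [if_pos hd,
          Fintype.card_congr (Equiv.subtypeUnivEquiv fun x => ⟨he, Q_of_deg t hd x⟩),
          Fintype.card_fun, ZMod.card, Fintype.card_fin]
      · rw [if_neg hd]
        push_neg at hd
        obtain ⟨i0, j0, hij⟩ := hd
        have h1 : B (t i0) (t j0) = 1 := by
          rcases (by decide : ∀ z : ZMod 2, z = 0 ∨ z = 1) (B (t i0) (t j0)) with h | h
          · exact absurd h hij
          · exact h
        rw [Fintype.card_congr (Equiv.subtypeEquivRight fun x => and_iff_right he)]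
        exact card_nondeg he h1
    · rw [if_neg he]
      exact Fintype.card_eq_zero_iff.mpr ⟨fun x => (he x.2.1).elim⟩
  set A1 : Finset (Fin n → V) := Finset.univ.filter (fun t => ∀ i, M w1 (t i)) with hA1def
  set A2 : Finset (Fin n → V) := Finset.univ.filter (fun t => ∀ i, M w2 (t i)) with hA2def
  set A3 : Finset (Fin n → V) := Finset.univ.filter (fun t => ∀ i, M w3 (t i)) with hA3def
  set A0 : Finset (Fin n → V) := Finset.univ.filter (fun t => ∀ i, t i = 0 ∨ t i = r) with hA0def
  set E : Finset (Fin n → V) := Finset.univ.filter (fun t => ∀ i, S (t i)) with hEdef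
  set D : Finset (Fin n → V) := E.filter (fun t => ∀ i j, B (t i) (t j) = 0) with hDdef
  set C : Finset (Fin n → V) := E.filter (fun t => ¬ ∀ i j, B (t i) (t j) = 0) with hCdef
  have hN : Nat.card {p : (Fin n → V) × (Fin n → ZMod 2) //
      (∀ i, Even (wt (p.1 i))) ∧
        ∀ e : Finset (Fin n), e.card = 3 →
          ∑ i ∈ e, p.2 i * ((wt fun j => ∏ k ∈ e.erase i, p.1 k j : ℕ) : ZMod 2) = 0}
      = D.card * 2 ^ n + C.card * 4 := by
    rw [Nat.card_congr (Equiv.subtypeEquivRight hP),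
      Nat.card_congr (Equiv.subtypeProdEquivSigmaSubtype
        (fun (t : Fin n → V) (x : Fin n → ZMod 2) => (∀ i, S (t i)) ∧ Q t x)),
      Nat.card_eq_fintype_card, Fintype.card_sigma]
    calc (∑ t : Fin n → V, Fintype.card {x : Fin n → ZMod 2 // (∀ i, S (t i)) ∧ Q t x})
        = ∑ t : Fin n → V, (if (∀ i, S (t i)) then
            (if (∀ i j, B (t i) (t j) = 0) then 2 ^ n else 4) else 0) :=
          Finset.sum_congr rfl fun t _ => hval t
      _ = ∑ t ∈ E, (if (∀ i j, B (t i) (t j) = 0) then 2 ^ n else 4) :=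
          (Finset.sum_filter _ _).symm
      _ = (∑ _t ∈ D, 2 ^ n) + ∑ _t ∈ C, 4 := Finset.sum_ite _ _
      _ = D.card * 2 ^ n + C.card * 4 := by
          rw [Finset.sum_const, Finset.sum_const, smul_eq_mul, smul_eq_mul]
  have hsplit : D.card + C.card = E.card :=
    Finset.card_filter_add_card_filter_not _
  have hE : E.card = 8 ^ n := card_forall S 8 card_S
  have hA1 : A1.card = 4 ^ n := card_forall (M w1) 4 card_Mw1
  have hA2 : A2.card = 4 ^ n := card_forall (M w2) 4 card_Mw2
  have hA3 : A3.card = 4 ^ n := card_forall (M w3) 4 card_Mw3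
  have hA0 : A0.card = 2 ^ n := card_forall (fun u => u = 0 ∨ u = r) 2 card_core
  have hDeq : D = (A1 ∪ A2) ∪ A3 := by
    ext t
    simp only [hDdef, hEdef, hA1def, hA2def, hA3def, Finset.mem_filter, Finset.mem_union,
      Finset.mem_univ, true_and]
    constructor
    · rintro ⟨h1, h2⟩
      rcases (deg_iff t h1).mp h2 with h | h | h
      · exact Or.inl (Or.inl h)
      · exact Or.inl (Or.inr h)
      · exact Or.inr h
    · rintro ((h | h) | h)
      · exact ⟨fun i => mem_S _ (Or.inl (h i)), (deg_iff t fun i => mem_S _ (Or.inl (h i))).mpr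
          (Or.inl h)⟩
      · exact ⟨fun i => mem_S _ (Or.inr (Or.inl (h i))),
          (deg_iff t fun i => mem_S _ (Or.inr (Or.inl (h i)))).mpr (Or.inr (Or.inl h))⟩
      · exact ⟨fun i => mem_S _ (Or.inr (Or.inr (h i))),
          (deg_iff t fun i => mem_S _ (Or.inr (Or.inr (h i)))).mpr (Or.inr (Or.inr h))⟩
  have i12 : A1 ∩ A2 = A0 := by
    ext t
    simp only [hA1def, hA2def, hA0def, Finset.mem_inter, Finset.mem_filter, Finset.mem_univ,
      true_and]
    constructor
    · rintro ⟨h1, h2⟩ i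
      exact core12 _ (h1 i) (h2 i)
    · intro h
      exact ⟨fun i => (core_sub _ (h i)).1, fun i => (core_sub _ (h i)).2.1⟩
  have i123 : (A1 ∪ A2) ∩ A3 = A0 := by
    ext t
    simp only [hA1def, hA2def, hA3def, hA0def, Finset.mem_inter, Finset.mem_union,
      Finset.mem_filter, Finset.mem_univ, true_and]
    constructor
    · rintro ⟨h1 | h1, h3⟩ i
      · exact core123 _ (Or.inl (h1 i)) (h3 i)
      · exact core123 _ (Or.inr (h1 i)) (h3 i)
    · intro h
      exact ⟨Or.inl fun i => (core_sub _ (h i)).1, fun i => (core_sub _ (h i)).2.2⟩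
  have c12 : (A1 ∪ A2).card + A0.card = 4 ^ n + 4 ^ n := by
    have := Finset.card_union_add_card_inter A1 A2
    rw [i12, hA1, hA2] at this
    exact this
  have c123 : D.card + A0.card = (A1 ∪ A2).card + 4 ^ n := by
    have := Finset.card_union_add_card_inter (A1 ∪ A2) A3
    rw [i123, hA3] at this
    rw [hDeq]
    exact this
  rw [hN]
  have e3' : (2 : ℤ) ^ (3 * n) = ((2 : ℤ) ^ n) ^ 3 := by rw [mul_comm, pow_mul]
  have e2' : (2 : ℤ) ^ (2 * n) = ((2 : ℤ) ^ n) ^ 2 := by rw [mul_comm, pow_mul]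
  have e8 : ((8 : ℕ) ^ n : ℤ) = ((2 : ℤ) ^ n) ^ 3 := by
    push_cast
    rw [← pow_mul, mul_comm, pow_mul]
    norm_num
  have e4 : ((4 : ℕ) ^ n : ℤ) = ((2 : ℤ) ^ n) ^ 2 := by
    push_cast
    rw [← pow_mul, mul_comm, pow_mul]
    norm_num
  have h1 : (D.card : ℤ) + C.card = E.card := by exact_mod_cast hsplit
  have h2 : (E.card : ℤ) = ((2 : ℤ) ^ n) ^ 3 := by rw [← e8]; exact_mod_cast hE
  have h3 : ((A1 ∪ A2).card : ℤ) + A0.card = ((2 : ℤ) ^ n) ^ 2 + ((2 : ℤ) ^ n) ^ 2 := by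
    rw [show (((2 : ℤ) ^ n) ^ 2 + ((2 : ℤ) ^ n) ^ 2 : ℤ) = ((4 : ℕ) ^ n : ℤ) + ((4 : ℕ) ^ n : ℤ)
      by rw [e4]]
    exact_mod_cast c12
  have h4 : (D.card : ℤ) + A0.card = (A1 ∪ A2).card + ((2 : ℤ) ^ n) ^ 2 := by
    rw [← e4]
    exact_mod_cast c123
  have h5 : (A0.card : ℤ) = (2 : ℤ) ^ n := by exact_mod_cast hA0
  rw [e3', e2']
  push_cast
  linear_combination 4 * h1 + 4 * h2 + ((2 : ℤ) ^ n - 4) * h4 + ((2 : ℤ) ^ n - 4) * h3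
    - (2 * ((2 : ℤ) ^ n - 4)) * h5
end

section
/- For n ≥ 2, the function m₂(n) := 1 − 16·2^{−n} + 112·2^{−2n} − 224·2^{−3n} + 128·2^{−4n} satisfies 0 < m₂(n) ≤ 1, and the associated quantity M₂(n) := −log₂ m₂(n) attains its maximum over integers n ≥ 2 at n = 3, where M₂(3) = log₂(32/11). -/
open Real

/-- The 2-order Pauli–Liouville moment of the `n`-qubit `n`-complete hypergraph state. -/
noncomputable def m2 (n : ℕ) : ℝ :=
  1 - 16 / 2 ^ n + 112 / 2 ^ (2 * n) - 224 / 2 ^ (3 * n) + 128 / 2 ^ (4 * n)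

/-- The associated stabilizer 2-Rényi entropy `M₂(n) = −log₂ m₂(n)`. -/
noncomputable def M2 (n : ℕ) : ℝ := - Real.logb 2 (m2 n)

lemma m2_eq (n : ℕ) : m2 n = 1 - 16 / (2:ℝ)^n + 112 / ((2:ℝ)^n)^2
    - 224 / ((2:ℝ)^n)^3 + 128 / ((2:ℝ)^n)^4 := by
  unfold m2
  rw [pow_mul' (2:ℝ) 2 n, pow_mul' (2:ℝ) 3 n, pow_mul' (2:ℝ) 4 n]

lemma m2_ge (n : ℕ) (hn : 2 ≤ n) : 11/32 ≤ m2 n := by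
  rcases Nat.lt_or_ge n 4 with h | h
  · interval_cases n <;> norm_num [m2]
  · have hx : (16:ℝ) ≤ 2 ^ n := by
      calc (16:ℝ) = 2 ^ 4 := by norm_num
      _ ≤ 2 ^ n := pow_le_pow_right₀ (by norm_num) h
    set x : ℝ := 2 ^ n with hxdef
    have hx0 : (0:ℝ) < x := by positivity
    rw [m2_eq]
    have he : 1 - 16 / x + 112 / x^2 - 224 / x^3 + 128 / x^4
        = (x^4 - 16*x^3 + 112*x^2 - 224*x + 128) / x^4 := by
      field_simp
    rw [he, le_div_iff₀ (by positivity)]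
    have ht : (0:ℝ) ≤ x - 16 := by linarith
    nlinarith [mul_nonneg (mul_nonneg ht ht) ht, mul_nonneg ht ht,
      mul_nonneg (mul_nonneg (mul_nonneg ht ht) ht) ht]

lemma m2_le_one (n : ℕ) (hn : 2 ≤ n) : m2 n ≤ 1 := by
  have hx : (4:ℝ) ≤ 2 ^ n := by
    calc (4:ℝ) = 2 ^ 2 := by norm_num
    _ ≤ 2 ^ n := pow_le_pow_right₀ (by norm_num) hn
  set x : ℝ := 2 ^ n with hxdef
  have hx0 : (0:ℝ) < x := by positivity
  rw [m2_eq]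
  have he : 1 - 16 / x + 112 / x^2 - 224 / x^3 + 128 / x^4
      = (x^4 - 16*x^3 + 112*x^2 - 224*x + 128) / x^4 := by
    field_simp
  rw [he, div_le_one (by positivity)]
  nlinarith [mul_nonneg (mul_nonneg (by linarith : (0:ℝ) ≤ x - 1)
    (by linarith : (0:ℝ) ≤ x - 2)) (by linarith : (0:ℝ) ≤ x - 4)]

lemma m2_three : m2 3 = 11/32 := by norm_num [m2]

/-- For `n ≥ 2`: `0 < m₂(n) ≤ 1`, `M₂` attains its maximum over integers `n ≥ 2` at `n = 3`,
and `M₂(3) = log₂(32/11)`. -/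
theorem m2_bounds_and_M2_max (n : ℕ) (hn : 2 ≤ n) :
    0 < m2 n ∧ m2 n ≤ 1 ∧ M2 n ≤ M2 3 ∧ M2 3 = Real.logb 2 (32 / 11) := by
  have hge := m2_ge n hn
  have hpos : 0 < m2 n := by linarith
  refine ⟨hpos, m2_le_one n hn, ?_, ?_⟩
  · unfold M2
    rw [m2_three]
    have h : Real.logb 2 (11/32) ≤ Real.logb 2 (m2 n) :=
      Real.logb_le_logb_of_le (by norm_num) (by norm_num) hge
    linarith
  · unfold M2
    rw [m2_three, show (32:ℝ)/11 = ((11:ℝ)/32)⁻¹ by norm_num, Real.logb_inv]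
end

section
/- Let t₁,…,t_n ∈ {0,1}^{2α} be even-parity vectors, and suppose there exist indices k₁ ≠ k₂ with ‖t_{k₁} ⊙ t_{k₂}‖₁ ≡ 1 (mod 2). If x ∈ {0,1}^n satisfies the 3-edge constraints (for every 3-subset e of {1,…,n}: Σ_{i∈e} x_i·‖⊙_{k∈e,k≠i} t_k‖₁ ≡ 0 mod 2), then for any two indices i₁, i₂ ∉ {k₁,k₂} with t_{i₁} = t_{i₂}, we have x_{i₁} = x_{i₂}. -/
open Finset

/-- If the even-parity vectors `t₁,…,t_n ∈ {0,1}^{2α}` contain a pair `k₁ ≠ k₂` with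
`‖t_{k₁} ⊙ t_{k₂}‖₁` odd, and `x` satisfies all 3-edge constraints, then `x_{i₁} = x_{i₂}`
for any `i₁, i₂ ∉ {k₁,k₂}` with `t_{i₁} = t_{i₂}`. -/
theorem x_eq_of_same_t (α n : ℕ) (t : Fin n → Fin (2 * α) → ZMod 2)
    (ht : ∀ i, Even (wt (t i)))
    (k₁ k₂ : Fin n) (hk : k₁ ≠ k₂)
    (hodd : ¬ Even (wt fun j => t k₁ j * t k₂ j))
    (x : Fin n → ZMod 2)
    (hx : ∀ e : Finset (Fin n), e.card = 3 →
      ∑ i ∈ e, x i * ((wt fun j => ∏ k ∈ e.erase i, t k j : ℕ) : ZMod 2) = 0)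
    (i₁ i₂ : Fin n) (h₁₁ : i₁ ≠ k₁) (h₁₂ : i₁ ≠ k₂) (h₂₁ : i₂ ≠ k₁) (h₂₂ : i₂ ≠ k₂)
    (hteq : t i₁ = t i₂) : x i₁ = x i₂ := by
  have key : ∀ a : Fin n, a ≠ k₁ → a ≠ k₂ →
      x a * ((wt fun j => t k₁ j * t k₂ j : ℕ) : ZMod 2)
      + (x k₁ * ((wt fun j => t a j * t k₂ j : ℕ) : ZMod 2)
      + x k₂ * ((wt fun j => t a j * t k₁ j : ℕ) : ZMod 2)) = 0 := by
    intro a ha1 ha2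
    have hnm : a ∉ ({k₁, k₂} : Finset (Fin n)) := by simp [ha1, ha2]
    have h3 : ({a, k₁, k₂} : Finset (Fin n)).card = 3 := by
      rw [card_insert_of_notMem hnm, card_insert_of_notMem (by simp [hk]),
        card_singleton]
    have hcon := hx {a, k₁, k₂} h3
    rw [sum_insert hnm, sum_pair hk] at hcon
    have e1 : ({a, k₁, k₂} : Finset (Fin n)).erase a = {k₁, k₂} :=
      erase_insert hnm
    have e2 : ({a, k₁, k₂} : Finset (Fin n)).erase k₁ = {a, k₂} := by
      ext z
      simp only [mem_erase, mem_insert, mem_singleton]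
      constructor
      · rintro ⟨hz, rfl | rfl | rfl⟩ <;> tauto
      · rintro (rfl | rfl)
        exacts [⟨ha1, Or.inl rfl⟩, ⟨Ne.symm hk, Or.inr (Or.inr rfl)⟩]
    have e3 : ({a, k₁, k₂} : Finset (Fin n)).erase k₂ = {a, k₁} := by
      ext z
      simp only [mem_erase, mem_insert, mem_singleton]
      constructor
      · rintro ⟨hz, rfl | rfl | rfl⟩ <;> tauto
      · rintro (rfl | rfl)
        exacts [⟨ha2, Or.inl rfl⟩, ⟨hk, Or.inr (Or.inl rfl)⟩]
    simp only [e1, e2, e3, prod_pair hk, prod_pair ha2, prod_pair ha1] at hcon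
    exact hcon
  have h1 := key i₁ h₁₁ h₁₂
  have h2 := key i₂ h₂₁ h₂₂
  rw [← hteq] at h2
  have hc : ((wt fun j => t k₁ j * t k₂ j : ℕ) : ZMod 2) = 1 := by
    have hm : (wt fun j => t k₁ j * t k₂ j) % 2 = 1 :=
      Nat.odd_iff.mp (Nat.not_even_iff_odd.mp hodd)
    rw [← ZMod.natCast_mod _ 2, hm, Nat.cast_one]
  rw [hc, mul_one] at h1 h2
  have := h1.trans h2.symm
  exact add_right_cancel this
end

section
/- Let A be the set of even-parity vectors in {0,1}⁴ and consider n-tuples T ∈ Aⁿ for which at least one pair i ≠ k has ‖t_i ⊙ t_k‖₁ odd (componentwise product, weight mod 2). For each such T, the number of x ∈ {0,1}ⁿ satisfying all 3-edge constraints (Σ_{i∈e} x_i·‖⊙_{k∈e,k≠i} t_k‖₁ ≡ 0 mod 2 for every 3-subset e) is exactly 4. -/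
open Finset

/-- The symplectic form on `(ZMod 2)²`. -/
def sw (a b : ZMod 2 × ZMod 2) : ZMod 2 := a.1 * b.2 + a.2 * b.1

lemma sw_self (a : ZMod 2 × ZMod 2) : sw a a = 0 := by revert a; decide

lemma sw_comm (a b : ZMod 2 × ZMod 2) : sw a b = sw b a := by revert a b; decide

lemma sw_cocycle (u v w z : ZMod 2 × ZMod 2) :
    sw u z * sw v w + sw v z * sw u w + sw w z * sw u v = 0 := by revert u v w z; decide

lemma two_zmod : (2 : ZMod 2) = 0 := by decide

lemma wt_cast {m : ℕ} (u : Fin m → ZMod 2) : ((wt u : ℕ) : ZMod 2) = ∑ j, u j := by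
  have h : ∀ a : ZMod 2, a = if a = 1 then (1 : ZMod 2) else 0 := by decide
  rw [wt, ← Finset.sum_boole]
  exact Finset.sum_congr rfl fun j _ => (h (u j)).symm

lemma omega_key : ∀ u0 u1 u2 u3 v0 v1 v2 v3 : ZMod 2,
    u0 + u1 + u2 + u3 = 0 → v0 + v1 + v2 + v3 = 0 →
    u0 * v0 + u1 * v1 + u2 * v2 + u3 * v3
      = (u0 + u1) * (v0 + v2) + (u0 + u2) * (v0 + v1) := by decide

lemma even_cast {m : ℕ} (h : Even m) : ((m : ℕ) : ZMod 2) = 0 := by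
  obtain ⟨r, hr⟩ := h
  subst hr; push_cast; linear_combination (r : ZMod 2) * two_zmod

lemma odd_cast {m : ℕ} (h : ¬ Even m) : ((m : ℕ) : ZMod 2) = 1 := by
  obtain ⟨r, hr⟩ := Nat.not_even_iff_odd.mp h
  subst hr; push_cast; linear_combination (r : ZMod 2) * two_zmod

/-- Let `t₁,…,t_n ∈ {0,1}⁴` be even-parity vectors with at least one pair `i ≠ k` such that
`‖t_i ⊙ t_k‖₁` is odd.  Then the number of `x ∈ {0,1}^n` satisfying all 3-edge constraints
`Σ_{i∈e} x_i·‖⊙_{k∈e,k≠i} t_k‖₁ ≡ 0 (mod 2)` is exactly `4`. -/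
theorem card_valid_x_eq_four (n : ℕ) (hn : 3 ≤ n)
    (t : Fin n → Fin 4 → ZMod 2)
    (ht : ∀ i, Even (wt (t i)))
    (hodd : ∃ i k, i ≠ k ∧ ¬ Even (wt fun j => t i j * t k j)) :
    Nat.card {x : Fin n → ZMod 2 //
        ∀ e : Finset (Fin n), e.card = 3 →
          ∑ i ∈ e, x i * ((wt fun j => ∏ k ∈ e.erase i, t k j : ℕ) : ZMod 2) = 0} = 4 := by
  classical
  set c : Fin n → ZMod 2 × ZMod 2 := fun i => (t i 0 + t i 1, t i 0 + t i 2) with hc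
  have hte : ∀ i, ∑ j, t i j = 0 := by
    intro i
    rw [← wt_cast]
    exact even_cast (ht i)
  have hB : ∀ a b : Fin n,
      ((wt fun j => t a j * t b j : ℕ) : ZMod 2) = sw (c a) (c b) := by
    intro a b
    rw [wt_cast]
    have ha := hte a
    have hb := hte b
    rw [Fin.sum_univ_four] at ha hb ⊢
    simpa [sw, hc] using omega_key _ _ _ _ _ _ _ _ ha hb
  have hsum : ∀ (x : Fin n → ZMod 2) (a b d : Fin n), a ≠ b → a ≠ d → b ≠ d →
      (∑ i ∈ ({a, b, d} : Finset (Fin n)),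
          x i * ((wt fun j => ∏ k ∈ ({a, b, d} : Finset (Fin n)).erase i, t k j : ℕ) : ZMod 2))
        = x a * sw (c b) (c d) + x b * sw (c a) (c d) + x d * sw (c a) (c b) := by
    intro x a b d hab had hbd
    have e1 : ({a, b, d} : Finset (Fin n)).erase a = {b, d} :=
      Finset.erase_insert (by simp [hab, had])
    have e2 : ({a, b, d} : Finset (Fin n)).erase b = {a, d} := by
      ext y
      simp only [Finset.mem_erase, Finset.mem_insert, Finset.mem_singleton]
      aesop
    have e3 : ({a, b, d} : Finset (Fin n)).erase d = {a, b} := by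
      ext y
      simp only [Finset.mem_erase, Finset.mem_insert, Finset.mem_singleton]
      aesop
    rw [Finset.sum_insert (by simp [hab, had]), Finset.sum_insert (by simp [hbd]),
      Finset.sum_singleton, e1, e2, e3]
    have p1 : (fun j => ∏ k ∈ ({b, d} : Finset (Fin n)), t k j) = fun j => t b j * t d j :=
      funext fun j => Finset.prod_pair hbd
    have p2 : (fun j => ∏ k ∈ ({a, d} : Finset (Fin n)), t k j) = fun j => t a j * t d j :=
      funext fun j => Finset.prod_pair had
    have p3 : (fun j => ∏ k ∈ ({a, b} : Finset (Fin n)), t k j) = fun j => t a j * t b j :=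
      funext fun j => Finset.prod_pair hab
    rw [p1, p2, p3, hB, hB, hB]
    ring
  have hcond : ∀ x : Fin n → ZMod 2,
      (∀ e : Finset (Fin n), e.card = 3 →
          ∑ i ∈ e, x i * ((wt fun j => ∏ k ∈ e.erase i, t k j : ℕ) : ZMod 2) = 0) ↔
      (∀ a b d : Fin n, a ≠ b → a ≠ d → b ≠ d →
          x a * sw (c b) (c d) + x b * sw (c a) (c d) + x d * sw (c a) (c b) = 0) := by
    intro x
    constructor
    · intro h a b d hab had hbd
      have := h {a, b, d} (Finset.card_eq_three.mpr ⟨a, b, d, hab, had, hbd, rfl⟩)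
      rwa [hsum x a b d hab had hbd] at this
    · intro h e he
      obtain ⟨a, b, d, hab, had, hbd, rfl⟩ := Finset.card_eq_three.mp he
      rw [hsum x a b d hab had hbd]
      exact h a b d hab had hbd
  obtain ⟨p, q, hpq, hw⟩ := hodd
  have hω : sw (c p) (c q) = 1 := by
    rw [← hB]
    exact odd_cast hw
  have hmem : ∀ ab : ZMod 2 × ZMod 2,
      ∀ e : Finset (Fin n), e.card = 3 →
        ∑ i ∈ e, (ab.1 * sw (c i) (c q) + ab.2 * sw (c i) (c p)) *
          ((wt fun j => ∏ k ∈ e.erase i, t k j : ℕ) : ZMod 2) = 0 := by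
    intro ab
    refine (hcond _).mpr ?_
    intro a b d hab had hbd
    have h1 := sw_cocycle (c a) (c b) (c d) (c q)
    have h2 := sw_cocycle (c a) (c b) (c d) (c p)
    linear_combination ab.1 * h1 + ab.2 * h2
  have e4 : {x : Fin n → ZMod 2 //
      ∀ e : Finset (Fin n), e.card = 3 →
        ∑ i ∈ e, x i * ((wt fun j => ∏ k ∈ e.erase i, t k j : ℕ) : ZMod 2) = 0}
      ≃ (ZMod 2 × ZMod 2) :=
    { toFun := fun x => (x.1 p, x.1 q)
      invFun := fun ab =>
        ⟨fun i => ab.1 * sw (c i) (c q) + ab.2 * sw (c i) (c p), hmem ab⟩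
      left_inv := by
        rintro ⟨x, hx⟩
        apply Subtype.ext
        funext i
        show x p * sw (c i) (c q) + x q * sw (c i) (c p) = x i
        by_cases hip : i = p
        · subst hip
          rw [hω, sw_self, mul_one, mul_zero, add_zero]
        by_cases hiq : i = q
        · subst hiq
          rw [sw_self, sw_comm, hω, mul_zero, mul_one, zero_add]
        have h := (hcond x).mp hx i p q hip hiq hpq
        rw [hω, mul_one] at h
        linear_combination h - x i * two_zmod
      right_inv := by
        rintro ⟨a, b⟩
        apply Prod.ext
        · show a * sw (c p) (c q) + b * sw (c p) (c p) = a
          rw [hω, sw_self, mul_one, mul_zero, add_zero]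
        · show a * sw (c q) (c q) + b * sw (c q) (c p) = b
          rw [sw_self, sw_comm, hω, mul_zero, mul_one, zero_add] }
  rw [Nat.card_congr e4]
  rw [Nat.card_eq_fintype_card]
  rfl
end
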